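/- For every positive integer n, the n-th Fourier cosine coefficient of x·Cl₂(2πx) on (0,1) satisfies 2·∫₀¹ x·Cl₂(2πx)·cos(2nπx) dx = (1/π)·(H_n/n² − 3/(2n³)), where H_n is the n-th harmonic number. -/

import Mathlib

/-!
Expanding `Cl₂` in its uniformly convergent sine series and integrating term by term, the
product-to-sum formula and `∫₀¹ x sin (2πjx) dx = -1/(2πj)` give the `k`-th term
`-(1/4π) k⁻² (1/(k+n) + 1/(k-n))`. Partial fractions split the resulting series into two
telescoping series, with sums `-H_n` and `-H_{n-1}`, and a correction from the term `k = n`.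
-/

open Real

/-- The Clausen function `Cl₂(θ) = ∑_{k=1}^∞ sin(kθ)/k²`. -/
noncomputable def Cl2 (θ : ℝ) : ℝ := ∑' k : ℕ, Real.sin ((k + 1) * θ) / ((k : ℝ) + 1) ^ 2

open Filter Topology Finset MeasureTheory

theorem hasSum_sub_add_of_antitone {u : ℕ → ℝ} (hanti : Antitone u)
    (hu : Tendsto u atTop (𝓝 0)) (n : ℕ) :
    HasSum (fun m => u m - u (m + n)) (∑ i ∈ range n, u i) := by
  have hnonneg : ∀ m, 0 ≤ u m - u (m + n) := fun m => sub_nonneg.2 (hanti (m.le_add_right n))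
  rw [hasSum_iff_tendsto_nat_of_nonneg hnonneg]
  have hpartial : ∀ N, ∑ m ∈ range N, (u m - u (m + n)) =
      ∑ i ∈ range n, u i - ∑ i ∈ range n, u (N + i) := by
    intro N
    have h₁ := sum_range_add u N n
    have h₂ := sum_range_add u n N
    simp only [sum_sub_distrib, add_comm _ n] at h₁ h₂ ⊢
    linarith
  simp only [hpartial]
  have htail : Tendsto (fun N => ∑ i ∈ range n, u (N + i)) atTop (𝓝 0) := by
    simpa using tendsto_finsetSum (range n) fun i _ => hu.comp (tendsto_add_atTop_nat i)
  simpa using htail.const_sub (∑ i ∈ range n, u i)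

theorem hasSum_one_div_add_one_sub_one_div_add (n : ℕ) :
    HasSum (fun m : ℕ => 1 / ((m : ℝ) + 1) - 1 / ((m : ℝ) + 1 + n)) (harmonic n) := by
  have hanti : Antitone fun m : ℕ => 1 / ((m : ℝ) + 1) := fun a b hab =>
    one_div_le_one_div_of_le (by positivity) (by gcongr)
  have := hasSum_sub_add_of_antitone hanti tendsto_one_div_add_atTop_nhds_zero_nat n
  convert this using 1
  · ext m; push_cast; ring_nf
  · simp [harmonic, one_div]

theorem sum_range_succ_one_div_sub (m : ℕ) :
    ∑ i ∈ range (m + 1), 1 / ((i : ℝ) - m) = -harmonic m := by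
  rw [sum_range_succ, sub_self, div_zero, add_zero, ← sum_range_reflect]
  simp only [harmonic, one_div]
  push_cast
  rw [← sum_neg_distrib]
  refine sum_congr rfl fun i hi => ?_
  have hi' := mem_range.1 hi
  rw [Nat.sub_sub, Nat.cast_sub (by omega), ← inv_neg]
  congr 1; push_cast; ring

theorem one_div_sq_mul_add_one_div_sub {x y : ℝ} (hx : 0 < x) (hy : 0 < y) :
    1 / x ^ 2 * (1 / (x + y) + 1 / (x - y)) =
      1 / y ^ 2 * ((1 / (x + y) - 1 / x) + (1 / (x - y) - 1 / x)) +
        if x = y then 2 / y ^ 3 else 0 := by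
  split_ifs with hxy
  · subst hxy
    field_simp
    ring
  · have : x - y ≠ 0 := sub_ne_zero.2 hxy
    field_simp
    ring

theorem hasSum_one_div_sub_one_div_add_one (m : ℕ) :
    HasSum (fun k : ℕ => 1 / ((k : ℝ) + 1 - (m + 1)) - 1 / ((k : ℝ) + 1)) (-harmonic m) := by
  rw [← hasSum_nat_add_iff' (m + 1)]
  have hshift : HasSum (fun k : ℕ => 1 / ((k + (m + 1) : ℕ) + 1 - ((m : ℝ) + 1)) -
      1 / ((k + (m + 1) : ℕ) + 1)) (harmonic (m + 1)) := by
    convert hasSum_one_div_add_one_sub_one_div_add (m + 1) using 2 with k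
    push_cast; ring_nf
  have hfinite : ∑ i ∈ range (m + 1), (1 / ((i : ℝ) + 1 - (m + 1)) - 1 / ((i : ℝ) + 1)) =
      -harmonic m - harmonic (m + 1) := by
    have hterm (i : ℕ) : 1 / ((i : ℝ) + 1 - (m + 1)) = 1 / ((i : ℝ) - m) := by ring_nf
    simp only [sum_sub_distrib, hterm, sum_range_succ_one_div_sub, harmonic]
    push_cast
    simp only [one_div]
  rwa [hfinite, sub_sub_cancel]

theorem hasSum_one_div_sq_mul_add_one_div_sub (n : ℕ) (hn : 0 < n) :
    HasSum
      (fun k : ℕ => 1 / ((k : ℝ) + 1) ^ 2 * (1 / ((k : ℝ) + 1 + n) + 1 / ((k : ℝ) + 1 - n)))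
      (3 / (n : ℝ) ^ 3 - 2 * harmonic n / (n : ℝ) ^ 2) := by
  obtain ⟨m, rfl⟩ : ∃ m, n = m + 1 := ⟨n - 1, by omega⟩
  rw [harmonic_succ]
  push_cast
  have hplus : HasSum (fun k : ℕ => 1 / ((k : ℝ) + 1 + (m + 1)) - 1 / ((k : ℝ) + 1))
      (-harmonic (m + 1)) := by
    simpa using (hasSum_one_div_add_one_sub_one_div_add (m + 1)).neg
  have hcorr : HasSum (fun k : ℕ => if (k : ℝ) + 1 = m + 1 then 2 / ((m : ℝ) + 1) ^ 3 else 0)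
      (2 / ((m : ℝ) + 1) ^ 3) := by
    simpa using hasSum_ite_eq m (2 / ((m : ℝ) + 1) ^ 3)
  have hsum := ((hplus.add (hasSum_one_div_sub_one_div_add_one m)).mul_left
    (1 / ((m : ℝ) + 1) ^ 2)).add hcorr
  rw [harmonic_succ] at hsum
  push_cast at hsum
  convert! hsum.congr_fun fun k => one_div_sq_mul_add_one_div_sub (by positivity) (by positivity)
    using 1
  field_simp
  ring

theorem integral_mul_sin_mul {c : ℝ} (hc : c ≠ 0) :
    ∫ x in (0 : ℝ)..1, x * sin (c * x) = sin c / c ^ 2 - cos c / c := by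
  have hderiv : ∀ x ∈ Set.uIcc (0 : ℝ) 1,
      HasDerivAt (fun x => sin (c * x) / c ^ 2 - x * cos (c * x) / c) (x * sin (c * x)) x := by
    intro x _
    have hlin : HasDerivAt (fun x => c * x) c x := by simpa using (hasDerivAt_id x).const_mul c
    refine ((hlin.sin.div_const (c ^ 2)).sub (((hasDerivAt_id' x).mul hlin.cos).div_const c))
      |>.congr_deriv ?_
    field_simp
    ring
  rw [intervalIntegral.integral_eq_sub_of_hasDerivAt hderiv
    ((by fun_prop : Continuous fun x => x * sin (c * x)).intervalIntegrable 0 1)]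
  simp

theorem integral_mul_sin_two_pi_int_mul (j : ℤ) :
    ∫ x in (0 : ℝ)..1, x * sin (2 * π * j * x) = -1 / (2 * π * j) := by
  rcases eq_or_ne j 0 with rfl | hj
  · simp
  have hj' : (j : ℝ) ≠ 0 := Int.cast_ne_zero.2 hj
  rw [integral_mul_sin_mul (by positivity), mul_comm (2 * π),
    show (j : ℝ) * (2 * π) = (2 * j : ℤ) * π by push_cast; ring, sin_int_mul_pi,
    show ((2 * j : ℤ) : ℝ) * π = j * (2 * π) by push_cast; ring, cos_int_mul_two_pi]
  field_simp
  ring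

/-- At `m = n` the second term is `1 / 0 = 0`, which is indeed `∫₀¹ x sin (2π(m - n)x) dx`. -/
theorem integral_mul_sin_mul_cos (m n : ℤ) :
    ∫ x in (0 : ℝ)..1, x * sin (2 * π * m * x) * cos (2 * π * n * x) =
      -(1 / (4 * π)) * (1 / ((m : ℝ) + n) + 1 / ((m : ℝ) - n)) := by
  have hprod : ∀ x : ℝ, x * sin (2 * π * m * x) * cos (2 * π * n * x) =
      (x * sin (2 * π * (m + n : ℤ) * x) + x * sin (2 * π * (m - n : ℤ) * x)) / 2 := by
    intro x
    have := two_mul_sin_mul_cos (2 * π * m * x) (2 * π * n * x)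
    push_cast
    rw [show 2 * π * ((m : ℝ) + n) * x = 2 * π * m * x + 2 * π * n * x by ring,
      show 2 * π * ((m : ℝ) - n) * x = 2 * π * m * x - 2 * π * n * x by ring]
    linear_combination x / 2 * this
  simp_rw [hprod]
  rw [intervalIntegral.integral_div, intervalIntegral.integral_add
    ((by fun_prop : Continuous _).intervalIntegrable 0 1)
    ((by fun_prop : Continuous _).intervalIntegrable 0 1),
    integral_mul_sin_two_pi_int_mul, integral_mul_sin_two_pi_int_mul]
  push_cast
  simp only [div_eq_mul_inv, mul_inv]
  ring

theorem summable_one_div_nat_add_one_sq : Summable fun k : ℕ => 1 / ((k : ℝ) + 1) ^ 2 := by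
  have h : Summable fun k : ℕ => 1 / (k : ℝ) ^ 2 := summable_one_div_nat_pow.2 one_lt_two
  simpa using (summable_nat_add_iff 1).2 h

theorem norm_sin_div_sq_le (k : ℕ) (θ : ℝ) :
    ‖sin ((k + 1) * θ) / ((k : ℝ) + 1) ^ 2‖ ≤ 1 / ((k : ℝ) + 1) ^ 2 := by
  rw [norm_div, norm_pow, Real.norm_of_nonneg (by positivity : (0 : ℝ) ≤ k + 1)]
  gcongr
  exact abs_sin_le_one _

theorem hasSum_Cl2 (θ : ℝ) :
    HasSum (fun k : ℕ => sin ((k + 1) * θ) / ((k : ℝ) + 1) ^ 2) (Cl2 θ) :=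
  (summable_one_div_nat_add_one_sq.of_norm_bounded (norm_sin_div_sq_le · θ)).hasSum

theorem hasSum_intervalIntegral_Cl2_mul {g : ℝ → ℝ} {a b : ℝ} (c : ℝ)
    (hg : IntervalIntegrable g volume a b) :
    HasSum (fun k : ℕ => ∫ x in a..b, sin ((k + 1) * (c * x)) / ((k : ℝ) + 1) ^ 2 * g x)
      (∫ x in a..b, Cl2 (c * x) * g x) := by
  refine intervalIntegral.hasSum_integral_of_dominated_convergence
    (fun k x => 1 / ((k : ℝ) + 1) ^ 2 * ‖g x‖) (fun k => ?_) (fun k => ?_) ?_ ?_ ?_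
  · exact ((by fun_prop : Continuous fun x => sin ((k + 1) * (c * x)) / ((k : ℝ) + 1) ^ 2)
      |>.aestronglyMeasurable).mul hg.def'.aestronglyMeasurable
  · refine ae_of_all _ fun x _ => ?_
    rw [norm_mul]
    gcongr
    exact norm_sin_div_sq_le k _
  · exact ae_of_all _ fun x _ => summable_one_div_nat_add_one_sq.mul_right _
  · simp_rw [tsum_mul_right]
    exact hg.norm.const_mul _
  · exact ae_of_all _ fun x _ => (hasSum_Cl2 (c * x)).mul_right (g x)

/-- For every positive integer `n`, the `n`-th Fourier cosine coefficient of
`x·Cl₂(2πx)` on `(0,1)`: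
`2·∫₀¹ x·Cl₂(2πx)·cos(2nπx) dx = (1/π)·(H_n/n² − 3/(2n³))`. -/
theorem fourier_cos_coeff_x_mul_Cl2 (n : ℕ) (hn : 0 < n) :
    2 * ∫ x in (0:ℝ)..1, x * Cl2 (2 * π * x) * Real.cos (2 * n * π * x) =
      (1 / π) * ((harmonic n : ℝ) / (n : ℝ) ^ 2 - 3 / (2 * (n : ℝ) ^ 3)) := by
  have hterm : ∀ k : ℕ, ∫ x in (0 : ℝ)..1,
      sin ((k + 1) * (2 * π * x)) / ((k : ℝ) + 1) ^ 2 * (x * cos (2 * n * π * x)) =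
        -(1 / (4 * π)) *
          (1 / ((k : ℝ) + 1) ^ 2 * (1 / ((k : ℝ) + 1 + n) + 1 / ((k : ℝ) + 1 - n))) := by
    intro k
    have h := integral_mul_sin_mul_cos (k + 1) n
    push_cast at h
    rw [mul_left_comm, ← h, ← intervalIntegral.integral_const_mul]
    congr 1 with x
    ring_nf
  have hseries := hasSum_intervalIntegral_Cl2_mul (2 * π)
    ((by fun_prop : Continuous fun x : ℝ => x * cos (2 * n * π * x)).intervalIntegrable 0 1)
  simp only [hterm] at hseries
  have hintegral : ∫ x in (0 : ℝ)..1, x * Cl2 (2 * π * x) * cos (2 * n * π * x) =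
      -(1 / (4 * π)) * (3 / (n : ℝ) ^ 3 - 2 * harmonic n / (n : ℝ) ^ 2) := by
    rw [← hseries.unique ((hasSum_one_div_sq_mul_add_one_div_sub n hn).mul_left _)]
    congr 1 with x
    ring
  rw [hintegral]
  field_simp
  ring
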